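/- If Γ is a quasi-strongly connected circuit-free digraph on N, then Prod(N,v,Γ) = v(N) for every TU game v; equivalently, the Average Forest measure is efficient: Σ_{i∈N} AF_i(N,v,Γ) = v(N). -/

import Mathlib

open scoped Classical
open Finset

section Preamble

variable {V : Type*} [Fintype V] [DecidableEq V]

/-- Adjacency relation of a digraph given by its arc set. -/
def Adj (A : Finset (V × V)) (i j : V) : Prop := (i, j) ∈ A

/-- A digraph is circuit-free if it contains no directed cycle. -/
def CircuitFree (A : Finset (V × V)) : Prop :=
  ∀ i : V, ¬ Relation.TransGen (Adj A) i i

/-- In-degree of a node. -/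
def inDeg (A : Finset (V × V)) (j : V) : ℕ :=
  (A.filter (fun a => a.2 = j)).card

/-- Weak connectivity (chains, ignoring orientation). -/
def WConn (A : Finset (V × V)) (i j : V) : Prop :=
  Relation.ReflTransGen (fun a b => (a, b) ∈ A ∨ (b, a) ∈ A) i j

/-- The weakly connected component of `i`, as a finset. -/
noncomputable def compF (A : Finset (V × V)) (i : V) : Finset V :=
  Finset.univ.filter (fun j => WConn A i j)

/-- `IsPath A p` : `p` is a (nonempty) directed path along arcs of `A`. -/
def IsPath (A : Finset (V × V)) : List V → Prop
  | [] => False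
  | [_] => True
  | i :: j :: l => (i, j) ∈ A ∧ IsPath A (j :: l)

/-- The digraph `A` restricted to the node set `K` is an arborescence:
there is a root `r ∈ K` with a unique directed path from `r` to every node of `K`. -/
def IsArbOn (A : Finset (V × V)) (K : Set V) : Prop :=
  ∃ r ∈ K, ∀ i ∈ K, ∃! p : List V,
    IsPath A p ∧ p.head? = some r ∧ p.getLast? = some i

/-- A forest: every weakly connected component is an arborescence. -/
def IsForest (A : Finset (V × V)) : Prop :=
  ∀ i : V, IsArbOn A {j | WConn A i j}

/-- `F` is a maximal spanning forest of the digraph `A`. -/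
def IsMaxSpanningForest (A F : Finset (V × V)) : Prop :=
  F ⊆ A ∧ IsForest F ∧ ∀ a ∈ A, a ∉ F → ¬ IsForest (insert a F)

/-- The collection of all maximal spanning forests of `A`. -/
noncomputable def maxForests (A : Finset (V × V)) : Finset (Finset (V × V)) :=
  A.powerset.filter (fun F => IsMaxSpanningForest A F)

/-- `S̄_F(i)` : the node `i` together with all its successors in `F`. -/
noncomputable def succSet (F : Finset (V × V)) (i : V) : Finset V :=
  Finset.univ.filter (fun j => Relation.ReflTransGen (Adj F) i j)

/-- `Ŝ_F(i)` : the immediate successors of `i` in `F`. -/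
noncomputable def immSucc (F : Finset (V × V)) (i : V) : Finset V :=
  Finset.univ.filter (fun j => (i, j) ∈ F)

/-- Marginal contribution of player `i` with respect to the forest `F`. -/
noncomputable def marg (v : Finset V → ℝ) (F : Finset (V × V)) (i : V) : ℝ :=
  v (succSet F i) - ∑ j ∈ immSucc F i, v (succSet F j)

/-- The Average Forest leadership measure. -/
noncomputable def AF (v : Finset V → ℝ) (A : Finset (V × V)) (i : V) : ℝ :=
  (∑ F ∈ maxForests A, marg v F i) / (maxForests A).card

/-- The node sets of the arborescence components of a forest `F`. -/
noncomputable def comps (F : Finset (V × V)) : Finset (Finset V) :=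
  Finset.univ.image (fun i => compF F i)

/-- Productivity of the organisational situation. -/
noncomputable def Productivity (v : Finset V → ℝ) (A : Finset (V × V)) : ℝ :=
  (∑ F ∈ maxForests A, ∑ K ∈ comps F, v K) / (maxForests A).card

/-- Superadditivity of a TU game. -/
def Superadditive (v : Finset V → ℝ) : Prop :=
  ∀ S Q : Finset V, Disjoint S Q → v S + v Q ≤ v (S ∪ Q)

/-- Weak connectedness of the digraph. -/
def WeaklyConnected (A : Finset (V × V)) : Prop :=
  ∀ i j : V, WConn A i j

/-- Quasi-strong connectedness: existence of a root reaching every node. -/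
def HasRoot (A : Finset (V × V)) : Prop :=
  ∃ r : V, ∀ i : V, Relation.ReflTransGen (Adj A) r i

end Preamble

/-!
A circuit-free digraph whose in-degrees are at most one is a forest. So if a maximal spanning
forest `F` of `A` had a component missing the root `r` of `A`, the last arc of an `A`-path from `r`
to the root of that component, which has no predecessor in `F`, could be added to `F`; hence `F`
has the single component `N`. For any forest, the sum of the marginal contributions telescopes:
`v (S̄_F(j))` is counted once for `j` and subtracted once for each predecessor of `j`, so only the
roots survive, and the successor sets of the roots are the components.
-/

namespace IsPath

variable {V : Type*} {A : Finset (V × V)}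

theorem ne_nil {p : List V} (h : IsPath A p) : p ≠ [] := by
  rintro rfl
  exact h

theorem append_singleton_iff {p : List V} {b : V} :
    IsPath A (p ++ [b]) ↔ p = [] ∨ IsPath A p ∧ ∃ u, p.getLast? = some u ∧ (u, b) ∈ A := by
  induction p with
  | nil => simp [IsPath]
  | cons x t ih =>
    cases t with
    | nil => simp [IsPath]
    | cons y l =>
      simp only [List.cons_append, IsPath, List.getLast?_cons_cons] at ih ⊢
      rw [ih]
      simp only [reduceCtorEq, false_or]
      tauto

theorem concat {p : List V} {a u b : V}
    (hp : IsPath A p ∧ p.head? = some a ∧ p.getLast? = some u) (hub : (u, b) ∈ A) :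
    IsPath A (p ++ [b]) ∧ (p ++ [b]).head? = some a ∧ (p ++ [b]).getLast? = some b :=
  ⟨append_singleton_iff.2 (Or.inr ⟨hp.1, u, hp.2.2, hub⟩),
    by rw [List.head?_append_of_ne_nil _ hp.1.ne_nil, hp.2.1], by simp⟩

theorem exists_of_reflTransGen {a b : V} (h : Relation.ReflTransGen (Adj A) a b) :
    ∃ p, IsPath A p ∧ p.head? = some a ∧ p.getLast? = some b := by
  induction h with
  | refl => exact ⟨[a], trivial, rfl, rfl⟩
  | tail _ hbc ih =>
    obtain ⟨p, hp⟩ := ih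
    exact ⟨_, concat hp hbc⟩

end IsPath

section InDegree

variable {V : Type*} [DecidableEq V] {F : Finset (V × V)}

theorem inDeg_eq_zero_iff {j : V} : inDeg F j = 0 ↔ ∀ u, (u, j) ∉ F := by
  simp only [inDeg, Finset.card_eq_zero, Finset.filter_eq_empty_iff, Prod.forall]
  exact ⟨fun h u hu => h u j hu rfl, fun h u w hu hw => h u (hw ▸ hu)⟩

theorem inDeg_le_one_iff {j : V} :
    inDeg F j ≤ 1 ↔ ∀ u w, (u, j) ∈ F → (w, j) ∈ F → u = w := by
  simp only [inDeg, Finset.card_le_one, Finset.mem_filter, and_imp, Prod.forall]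
  constructor
  · intro h u w hu hw
    exact congrArg Prod.fst (h _ _ hu rfl _ _ hw rfl)
  · rintro h u _ hu rfl w _ hw rfl
    rw [h u w hu hw]

theorem eq_of_reflTransGen_of_inDeg_eq_zero {a r : V} (h : Relation.ReflTransGen (Adj F) a r)
    (hr : inDeg F r = 0) : a = r := by
  rcases h.cases_tail with rfl | ⟨u, -, hu⟩
  · rfl
  · exact absurd hu (inDeg_eq_zero_iff.1 hr u)

theorem IsPath.eq_of_inDeg_le_one (hdeg : ∀ j, inDeg F j ≤ 1) {r : V} (hr : inDeg F r = 0)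
    {p q : List V} (hp : IsPath F p) (hq : IsPath F q) (hpr : p.head? = some r)
    (hqr : q.head? = some r) (hlast : p.getLast? = q.getLast?) : p = q := by
  induction p using List.reverseRecOn generalizing q with
  | nil => exact absurd hp id
  | append_singleton p b ih =>
    induction q using List.reverseRecOn with
    | nil => exact absurd hq id
    | append_singleton q c =>
      obtain rfl : b = c := by simpa using hlast
      rcases IsPath.append_singleton_iff.1 hp with rfl | ⟨hp', u, hu, hub⟩ <;>
        rcases IsPath.append_singleton_iff.1 hq with rfl | ⟨hq', w, hw, hwb⟩
      · rfl
      · obtain rfl : b = r := by simpa using hpr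
        exact absurd hwb (inDeg_eq_zero_iff.1 hr w)
      · obtain rfl : b = r := by simpa using hqr
        exact absurd hub (inDeg_eq_zero_iff.1 hr u)
      · rw [List.head?_append_of_ne_nil _ hp'.ne_nil] at hpr
        rw [List.head?_append_of_ne_nil _ hq'.ne_nil] at hqr
        obtain rfl : u = w := inDeg_le_one_iff.1 (hdeg b) u w hub hwb
        rw [ih hp' hq' hpr hqr (hu.trans hw.symm)]

end InDegree

theorem WConn.symm {V : Type*} {A : Finset (V × V)} {i j : V} (h : WConn A i j) :
    WConn A j i := by
  induction h with
  | refl => exact .refl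
  | tail _ hab ih => exact ih.head hab.symm

theorem WConn.of_reflTransGen {V : Type*} {A : Finset (V × V)} {i j : V}
    (h : Relation.ReflTransGen (Adj A) i j) : WConn A i j :=
  Relation.ReflTransGen.mono (fun _ _ => Or.inl) _ _ h

theorem compF_eq_of_wConn {V : Type*} [Fintype V] {F : Finset (V × V)} {i j : V}
    (h : WConn F i j) : compF F i = compF F j := by
  ext k
  simp only [compF, Finset.mem_filter, Finset.mem_univ, true_and]
  exact ⟨h.symm.trans, h.trans⟩

theorem CircuitFree.mono {V : Type*} {A F : Finset (V × V)} (hA : CircuitFree A) (hFA : F ⊆ A) :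
    CircuitFree F :=
  fun i hi => hA i (Relation.TransGen.mono (fun _ _ hab => hFA hab) _ _ hi)

section Forest

variable {V : Type*} [DecidableEq V] {F : Finset (V × V)}

theorem reflTransGen_iff_of_wConn (hdeg : ∀ j, inDeg F j ≤ 1) {r x y : V} (hr : inDeg F r = 0)
    (hxy : WConn F x y) :
    Relation.ReflTransGen (Adj F) r x ↔ Relation.ReflTransGen (Adj F) r y := by
  -- `a` is the only predecessor of `b`, so `r` reaches `b` only through `a`
  have arc : ∀ a b, (a, b) ∈ F →
      (Relation.ReflTransGen (Adj F) r a ↔ Relation.ReflTransGen (Adj F) r b) := by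
    refine fun a b hab => ⟨fun h => h.tail hab, fun h => ?_⟩
    rcases h.cases_tail with rfl | ⟨c, hc, hcb⟩
    · exact absurd hab (inDeg_eq_zero_iff.1 hr a)
    · rwa [inDeg_le_one_iff.1 (hdeg b) a c hab hcb]
  induction hxy with
  | refl => rfl
  | tail _ hyz ih => exact ih.trans (hyz.elim (arc _ _) fun h => (arc _ _ h).symm)

theorem exists_inDeg_eq_zero_reflTransGen [Finite V] (hF : CircuitFree F) (i : V) :
    ∃ r, inDeg F r = 0 ∧ Relation.ReflTransGen (Adj F) r i := by
  have : IsTrans V (Relation.TransGen (Adj F)) := ⟨fun _ _ _ => Relation.TransGen.trans⟩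
  have : Std.Irrefl (Relation.TransGen (Adj F)) := ⟨hF⟩
  induction i using (Finite.wellFounded_of_trans_of_irrefl (Relation.TransGen (Adj F))).induction
    with
  | _ i ih =>
    by_cases h0 : inDeg F i = 0
    · exact ⟨i, h0, .refl⟩
    · obtain ⟨u, hu⟩ := not_forall_not.1 (mt inDeg_eq_zero_iff.2 h0)
      obtain ⟨r, hr, hru⟩ := ih u (.single hu)
      exact ⟨r, hr, hru.tail hu⟩

theorem isForest_of_inDeg_le_one [Finite V] (hF : CircuitFree F) (hdeg : ∀ j, inDeg F j ≤ 1) :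
    IsForest F := by
  intro i
  obtain ⟨r, hr, hri⟩ := exists_inDeg_eq_zero_reflTransGen hF i
  refine ⟨r, (WConn.of_reflTransGen hri).symm, fun j hj => ?_⟩
  obtain ⟨p, hp⟩ := IsPath.exists_of_reflTransGen ((reflTransGen_iff_of_wConn hdeg hr hj).1 hri)
  exact ⟨p, hp, fun q hq =>
    hq.1.eq_of_inDeg_le_one hdeg hr hp.1 hq.2.1 hp.2.1 (hq.2.2.trans hp.2.2.symm)⟩

theorem IsForest.inDeg_le_one (hF : IsForest F) (j : V) : inDeg F j ≤ 1 := by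
  obtain ⟨r, -, hr⟩ := hF j
  refine inDeg_le_one_iff.2 fun u w hu hw => ?_
  obtain ⟨pu, hpu, -⟩ := hr u (.single (Or.inr hu))
  obtain ⟨pw, hpw, -⟩ := hr w (.single (Or.inr hw))
  have : pu ++ [j] = pw ++ [j] := (hr j .refl).unique (IsPath.concat hpu hu) (IsPath.concat hpw hw)
  rw [List.append_cancel_right this, hpw.2.2] at hpu
  exact Option.some_injective _ hpu.2.2.symm

theorem IsForest.exists_wConn_inDeg_eq_zero (hF : IsForest F) (i : V) :
    ∃ ρ, WConn F i ρ ∧ inDeg F ρ = 0 := by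
  obtain ⟨ρ, hρ, hr⟩ := hF i
  refine ⟨ρ, hρ, inDeg_eq_zero_iff.2 fun w hw => ?_⟩
  obtain ⟨pw, hpw, -⟩ := hr w (hρ.tail (Or.inr hw))
  have : pw ++ [ρ] = [ρ] := (hr ρ hρ).unique (IsPath.concat hpw hw) ⟨trivial, rfl, rfl⟩
  exact hpw.1.ne_nil (by simpa using this)

theorem mem_maxForests {A : Finset (V × V)} :
    F ∈ maxForests A ↔ IsMaxSpanningForest A F := by
  simp only [maxForests, Finset.mem_filter, Finset.mem_powerset, and_iff_right_iff_imp]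
  exact fun h => h.1

end Forest

section Efficiency

variable {V : Type*} [Fintype V] [DecidableEq V]

theorem sum_marg_eq_sum_one_sub_inDeg (v : Finset V → ℝ) (F : Finset (V × V)) :
    ∑ i, marg v F i = ∑ j, (1 - inDeg F j : ℝ) * v (succSet F j) := by
  have arcs : ∑ i, ∑ j ∈ immSucc F i, v (succSet F j) = ∑ j, (inDeg F j : ℝ) * v (succSet F j) :=
    calc ∑ i, ∑ j ∈ immSucc F i, v (succSet F j)
        = ∑ a ∈ F, v (succSet F a.2) := by
          simp only [immSucc, Finset.sum_filter]
          rw [← Finset.sum_product', Finset.univ_product_univ, ← Finset.sum_filter]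
          simp
      _ = ∑ j, ∑ a ∈ F with a.2 = j, v (succSet F a.2) := (Finset.sum_fiberwise F _ _).symm
      _ = ∑ j, (inDeg F j : ℝ) * v (succSet F j) := by
          refine Finset.sum_congr rfl fun j _ => ?_
          rw [Finset.sum_congr rfl fun a ha => by rw [(Finset.mem_filter.1 ha).2],
            Finset.sum_const, nsmul_eq_mul, inDeg]
  simp only [marg, Finset.sum_sub_distrib, arcs, sub_mul, one_mul]

noncomputable def roots (F : Finset (V × V)) : Finset V :=
  Finset.univ.filter fun j => inDeg F j = 0

variable {F : Finset (V × V)}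

theorem IsForest.succSet_eq_compF (hF : IsForest F) {ρ : V} (hρ : inDeg F ρ = 0) :
    succSet F ρ = compF F ρ := by
  ext j
  simp only [succSet, compF, Finset.mem_filter, Finset.mem_univ, true_and]
  exact ⟨WConn.of_reflTransGen,
    fun h => (reflTransGen_iff_of_wConn hF.inDeg_le_one hρ h).1 .refl⟩

theorem IsForest.comps_eq_image_roots (hF : IsForest F) :
    comps F = (roots F).image (succSet F) := by
  ext K
  simp only [comps, roots, Finset.mem_image, Finset.mem_filter, Finset.mem_univ, true_and]
  constructor
  · rintro ⟨i, rfl⟩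
    obtain ⟨ρ, hiρ, hρ⟩ := hF.exists_wConn_inDeg_eq_zero i
    exact ⟨ρ, hρ, by rw [hF.succSet_eq_compF hρ, compF_eq_of_wConn hiρ]⟩
  · rintro ⟨ρ, hρ, rfl⟩
    exact ⟨ρ, (hF.succSet_eq_compF hρ).symm⟩

theorem IsForest.sum_marg_eq_sum_comps (hF : IsForest F) (v : Finset V → ℝ) :
    ∑ i, marg v F i = ∑ K ∈ comps F, v K := by
  have succSet_injOn : Set.InjOn (succSet F) (roots F) := by
    intro ρ _ ρ' hρ' h
    have : ρ' ∈ succSet F ρ := h ▸ Finset.mem_filter.2 ⟨Finset.mem_univ _, .refl⟩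
    exact eq_of_reflTransGen_of_inDeg_eq_zero (Finset.mem_filter.1 this).2
      (Finset.mem_filter.1 hρ').2
  rw [hF.comps_eq_image_roots, Finset.sum_image succSet_injOn, sum_marg_eq_sum_one_sub_inDeg,
    roots, Finset.sum_filter]
  refine Finset.sum_congr rfl fun j _ => ?_
  rcases Nat.le_one_iff_eq_zero_or_eq_one.1 (hF.inDeg_le_one j) with h | h <;> simp [h]

theorem sum_AF_eq_productivity (v : Finset V → ℝ) (A : Finset (V × V)) :
    ∑ i, AF v A i = Productivity v A := by
  simp only [AF, Productivity]
  rw [← Finset.sum_div, Finset.sum_comm]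
  exact congrArg (· / _) (Finset.sum_congr rfl fun F hF =>
    (mem_maxForests.1 hF).2.1.sum_marg_eq_sum_comps v)

end Efficiency

section Rooted

variable {V : Type*} [DecidableEq V] {A F : Finset (V × V)}

theorem inDeg_insert_le_one (hdeg : ∀ j, inDeg F j ≤ 1) {ρ : V} (hρ : inDeg F ρ = 0) (x j : V) :
    inDeg (insert (x, ρ) F) j ≤ 1 := by
  refine inDeg_le_one_iff.2 fun u w hu hw => ?_
  simp only [Finset.mem_insert, Prod.mk.injEq] at hu hw
  obtain rfl | hj := eq_or_ne j ρ
  · simp only [and_true, inDeg_eq_zero_iff.1 hρ, or_false] at hu hw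
    exact hu.trans hw.symm
  · simp only [hj, and_false, false_or] at hu hw
    exact inDeg_le_one_iff.1 (hdeg j) u w hu hw

theorem maxForests_nonempty [Finite V] (hA : CircuitFree A) : (maxForests A).Nonempty := by
  have empty_mem : ∅ ∈ A.powerset.filter IsForest :=
    Finset.mem_filter.2 ⟨Finset.empty_mem_powerset A,
      isForest_of_inDeg_le_one (hA.mono (Finset.empty_subset A)) fun j => by simp [inDeg]⟩
  obtain ⟨F, hF, hmax⟩ := (A.powerset.filter IsForest).exists_max_image Finset.card ⟨_, empty_mem⟩
  obtain ⟨hFA, hF⟩ := Finset.mem_filter.1 hF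
  refine ⟨F, mem_maxForests.2 ⟨Finset.mem_powerset.1 hFA, hF, fun a ha haF hins => ?_⟩⟩
  have := hmax _ (Finset.mem_filter.2 ⟨Finset.mem_powerset.2
    (Finset.insert_subset ha (Finset.mem_powerset.1 hFA)), hins⟩)
  rw [Finset.card_insert_of_notMem haF] at this
  omega

theorem IsMaxSpanningForest.weaklyConnected [Finite V] (hA : CircuitFree A) (hroot : HasRoot A)
    (hF : IsMaxSpanningForest A F) : WeaklyConnected F := by
  obtain ⟨hFA, hforest, hmax⟩ := hF
  obtain ⟨r, hr⟩ := hroot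
  suffices h : ∀ t, WConn F r t from fun i j => (h i).symm.trans (h j)
  by_contra! ⟨t, ht⟩
  obtain ⟨ρ, htρ, hρ⟩ := hforest.exists_wConn_inDeg_eq_zero t
  obtain rfl | ⟨x, -, hxρ⟩ := (hr ρ).cases_tail
  · exact ht htρ.symm
  exact hmax (x, ρ) hxρ (fun h => inDeg_eq_zero_iff.1 hρ x h) (isForest_of_inDeg_le_one
    (hA.mono (Finset.insert_subset hxρ hFA)) (inDeg_insert_le_one hforest.inDeg_le_one hρ x))

theorem comps_eq_singleton_univ [Fintype V] [Nonempty V] (hF : WeaklyConnected F) :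
    comps F = {Finset.univ} := by
  have : ∀ i, compF F i = Finset.univ := fun i =>
    Finset.filter_true_of_mem fun j _ => hF i j
  simp only [comps, this, Finset.univ_nonempty, Finset.image_const]

theorem productivity_eq_of_hasRoot [Fintype V] (hA : CircuitFree A) (hroot : HasRoot A)
    (v : Finset V → ℝ) : Productivity v A = v Finset.univ := by
  have : Nonempty V := ⟨hroot.choose⟩
  have hcard : ((maxForests A).card : ℝ) ≠ 0 := by
    exact_mod_cast (maxForests_nonempty hA).card_pos.ne'
  rw [Productivity, Finset.sum_congr rfl fun F hF => by
    rw [comps_eq_singleton_univ ((mem_maxForests.1 hF).weaklyConnected hA hroot),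
      Finset.sum_singleton], Finset.sum_const, nsmul_eq_mul, mul_div_cancel_left₀ _ hcard]

end Rooted

/-- if `Γ` is quasi-strongly connected then the productivity equals `v(N)`;
equivalently the Average Forest measure is efficient. -/
theorem productivity_of_hasRoot {V : Type*} [Fintype V] [DecidableEq V]
    (A : Finset (V × V)) (hA : CircuitFree A) (hroot : HasRoot A) :
    ∀ v : Finset V → ℝ,
      Productivity v A = v Finset.univ ∧ ∑ i : V, AF v A i = v Finset.univ := fun v =>
  ⟨productivity_eq_of_hasRoot hA hroot v,
    (sum_AF_eq_productivity v A).trans (productivity_eq_of_hasRoot hA hroot v)⟩
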